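/- arXiv:2411.18612 — 4 statements merged into one kernel-verified Lean document; each statement's English description precedes it below -/
import Mathlib

section
/- Let S be a finite nonempty set, μ⁰ a probability distribution on S, V : S → ℝ with 0 ≤ V(s) ≤ H for all s, and λ > 0. Then the infimum over all probability distributions μ on S of E_{s∼μ}[V(s)] + λ·D_TV(μ‖μ⁰) equals E_{s∼μ⁰}[min(V(s), V_min + λ)], where V_min = min_{s∈S} V(s) and D_TV(μ‖μ⁰) = (1/2)·Σ_s |μ(s) − μ⁰(s)|. -/
theorem tv_duality {S : Type*} [Fintype S] [Nonempty S]
    (μ0 : S → ℝ) (hμ0pos : ∀ s, 0 ≤ μ0 s) (hμ0sum : ∑ s, μ0 s = 1)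
    (V : S → ℝ) (H lam : ℝ) (hH : 0 ≤ H) (hV : ∀ s, 0 ≤ V s ∧ V s ≤ H)
    (hlam : 0 < lam) :
    sInf {x : ℝ | ∃ μ : S → ℝ, (∀ s, 0 ≤ μ s) ∧ (∑ s, μ s = 1) ∧
        x = ∑ s, μ s * V s + lam * ((1/2) * ∑ s, |μ s - μ0 s|)} =
      ∑ s, μ0 s * min (V s) ((Finset.univ.inf' Finset.univ_nonempty V) + lam) := by
  classical
  obtain ⟨s0, -, hs0⟩ := Finset.exists_mem_eq_inf' Finset.univ_nonempty V
  set c : ℝ := (Finset.univ.inf' Finset.univ_nonempty V) + lam with hcdef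
  have hc : c = V s0 + lam := by rw [hcdef, hs0]
  have hVmin : ∀ s, V s0 ≤ V s := fun s => hs0 ▸ Finset.inf'_le V (Finset.mem_univ s)
  set W : S → ℝ := fun s => min (V s) c with hW
  -- lower bound
  have hlb : ∀ x ∈ {x : ℝ | ∃ μ : S → ℝ, (∀ s, 0 ≤ μ s) ∧ (∑ s, μ s = 1) ∧
        x = ∑ s, μ s * V s + lam * ((1/2) * ∑ s, |μ s - μ0 s|)},
      (∑ s, μ0 s * W s) ≤ x := by
    rintro x ⟨μ, hpos, hsum, rfl⟩
    have hWb : ∀ s, |W s - (V s0 + lam/2)| ≤ lam/2 := by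
      intro s
      have h1 : V s0 ≤ W s := le_min (hVmin s) (by rw [hc]; linarith)
      have h2 : W s ≤ V s0 + lam := hc ▸ min_le_right _ _
      rw [abs_le]; constructor <;> linarith
    have h1 : ∑ s, μ s * W s ≤ ∑ s, μ s * V s :=
      Finset.sum_le_sum fun s _ => mul_le_mul_of_nonneg_left (min_le_left _ _) (hpos s)
    have h2 : ∑ s, (μ s - μ0 s) = 0 := by
      rw [Finset.sum_sub_distrib, hsum, hμ0sum]; ring
    set m : ℝ := V s0 + lam/2 with hm
    have h3 : ∑ s, (μ s - μ0 s) * (W s - m)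
        = ∑ s, μ s * W s - ∑ s, μ0 s * W s := by
      have e : ∀ s, (μ s - μ0 s) * (W s - m)
          = (μ s * W s - μ0 s * W s) - (μ s - μ0 s) * m := by intro s; ring
      rw [Finset.sum_congr rfl fun s _ => e s, Finset.sum_sub_distrib,
        Finset.sum_sub_distrib, ← Finset.sum_mul, h2]
      ring
    have h4 : |∑ s, (μ s - μ0 s) * (W s - m)| ≤ (∑ s, |μ s - μ0 s|) * (lam/2) := by
      calc |∑ s, (μ s - μ0 s) * (W s - m)| ≤ ∑ s, |(μ s - μ0 s) * (W s - m)| :=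
            Finset.abs_sum_le_sum_abs _ _
        _ = ∑ s, |μ s - μ0 s| * |W s - m| := by
            exact Finset.sum_congr rfl fun s _ => abs_mul _ _
        _ ≤ ∑ s, |μ s - μ0 s| * (lam/2) :=
            Finset.sum_le_sum fun s _ =>
              mul_le_mul_of_nonneg_left (hWb s) (abs_nonneg _)
        _ = (∑ s, |μ s - μ0 s|) * (lam/2) := by rw [Finset.sum_mul]
    have h5 : ∑ s, (μ s - μ0 s) * (W s - m) ≤ |∑ s, (μ s - μ0 s) * (W s - m)| :=
      le_abs_self _
    have h6 : ∑ s, μ0 s * W s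
        = ∑ s, μ s * W s - ∑ s, (μ s - μ0 s) * (W s - m) := by rw [h3]; ring
    rw [h6]
    have h5' : -(∑ s, (μ s - μ0 s) * (W s - m)) ≤ |∑ s, (μ s - μ0 s) * (W s - m)| :=
      neg_le_abs _
    have h7 : (∑ s, |μ s - μ0 s|) * (lam/2) = lam * (1/2 * ∑ s, |μ s - μ0 s|) := by ring
    linarith [h1, h4, h5, h5', h7]
  -- membership of the target value
  set f1 : S → ℝ := fun s => if V s ≤ c then μ0 s else 0 with hf1
  set f2 : S → ℝ := fun s => if V s ≤ c then 0 else μ0 s with hf2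
  set T : ℝ := ∑ s, f2 s with hT
  have hf12 : ∀ s, f1 s + f2 s = μ0 s := by
    intro s; simp only [hf1, hf2]; split_ifs <;> ring
  have hf1nonneg : ∀ s, 0 ≤ f1 s := by
    intro s; simp only [hf1]; split_ifs <;> [exact hμ0pos s; exact le_refl 0]
  have hf2nonneg : ∀ s, 0 ≤ f2 s := by
    intro s; simp only [hf2]; split_ifs <;> [exact le_refl 0; exact hμ0pos s]
  have hTnonneg : 0 ≤ T := Finset.sum_nonneg fun s _ => hf2nonneg s
  have hVs0c : V s0 ≤ c := by rw [hc]; linarith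
  have hf2s0 : f2 s0 = 0 := by simp only [hf2, if_pos hVs0c]
  set μ : S → ℝ := fun s => f1 s + (if s = s0 then T else 0) with hμ
  have hμpos : ∀ s, 0 ≤ μ s := by
    intro s; simp only [hμ]
    have : (0:ℝ) ≤ if s = s0 then T else 0 := by split_ifs <;> [exact hTnonneg; exact le_refl 0]
    linarith [hf1nonneg s]
  have hμsum : ∑ s, μ s = 1 := by
    simp only [hμ]
    rw [Finset.sum_add_distrib, Finset.sum_ite_eq' Finset.univ s0 (fun _ => T)]
    simp only [Finset.mem_univ, if_true]
    have : ∑ s, f1 s + T = ∑ s, (f1 s + f2 s) := by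
      rw [hT, Finset.sum_add_distrib]
    rw [this, Finset.sum_congr rfl fun s _ => hf12 s, hμ0sum]
  have hμV : ∑ s, μ s * V s = (∑ s, f1 s * V s) + T * V s0 := by
    simp only [hμ, add_mul]
    rw [Finset.sum_add_distrib]
    congr 1
    have e : ∀ s, (if s = s0 then T else 0) * V s = (if s = s0 then T * V s else 0) := by
      intro s; split_ifs <;> ring
    rw [Finset.sum_congr rfl fun s _ => e s,
      Finset.sum_ite_eq' Finset.univ s0 (fun s => T * V s)]
    simp
  have habs : ∑ s, |μ s - μ0 s| = 2 * T := by
    have e : ∀ s, |μ s - μ0 s| = f2 s + (if s = s0 then T - f2 s else 0) := by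
      intro s
      have : μ s - μ0 s = (if s = s0 then T else 0) - f2 s := by
        have := hf12 s; simp only [hμ]; linarith
      rw [this]
      split_ifs with h
      · subst h; rw [hf2s0]; simp [abs_of_nonneg hTnonneg]
      · rw [zero_sub, abs_neg, abs_of_nonneg (hf2nonneg s)]; ring
    rw [Finset.sum_congr rfl fun s _ => e s, Finset.sum_add_distrib,
      Finset.sum_ite_eq' Finset.univ s0 (fun s => T - f2 s)]
    simp only [Finset.mem_univ, if_true, hf2s0, ← hT]
    ring
  have htarget : ∑ s, μ0 s * W s = (∑ s, f1 s * V s) + c * T := by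
    have e : ∀ s, μ0 s * W s = f1 s * V s + c * f2 s := by
      intro s
      simp only [hW, hf1, hf2]
      split_ifs with h
      · rw [min_eq_left h]; ring
      · rw [min_eq_right (le_of_not_ge h)]; ring
    rw [Finset.sum_congr rfl fun s _ => e s, Finset.sum_add_distrib, ← Finset.mul_sum, ← hT]
  have hmem : (∑ s, μ0 s * W s) ∈ {x : ℝ | ∃ μ : S → ℝ, (∀ s, 0 ≤ μ s) ∧ (∑ s, μ s = 1) ∧
        x = ∑ s, μ s * V s + lam * ((1/2) * ∑ s, |μ s - μ0 s|)} := by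
    refine ⟨μ, hμpos, hμsum, ?_⟩
    rw [hμV, habs, htarget, hc]
    ring
  exact le_antisymm (csInf_le ⟨∑ s, μ0 s * W s, hlb⟩ hmem)
    (le_csInf ⟨_, hmem⟩ hlb)
end

section
/- Let S be a finite nonempty set, μ⁰ a probability distribution on S with full support, V : S → [0, H], and λ > 0. Then inf over probability distributions μ on S of E_{s∼μ}[V(s)] + λ·D_{χ²}(μ‖μ⁰) equals sup_{α ∈ [V_min, V_max]} { E_{s∼μ⁰}[min(V(s), α)] − (1/(4λ))·Var_{s∼μ⁰}[min(V(s), α)] }, where V_min and V_max are the minimum and maximum of V over S. -/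
open Finset

/-!
Completing the square gives, for every probability vector `μ` and every `W ≤ V`,
`∑ μ V + λ χ²(μ‖μ0) ≥ E_{μ0} W - Var_{μ0} W / (4λ)`, with equality when
`μ = μ0 (1 - (W - E_{μ0} W) / (2λ))` and `μ` vanishes wherever `W < V`. For `W = min V α` this
`μ` is a probability vector satisfying the slackness condition as soon as
`α = E_{μ0} (min V α) + 2λ`, a level the intermediate value theorem provides in
`[V_min, V_max]`; if there is none, `α = V_max` truncates nothing.
-/

theorem exists_mem_Icc_nonpos_and_eq_zero_of_lt {f : ℝ → ℝ} {a b : ℝ} (hab : a ≤ b)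
    (hf : ContinuousOn f (Set.Icc a b)) (ha : f a ≤ 0) :
    ∃ x ∈ Set.Icc a b, f x ≤ 0 ∧ (x < b → f x = 0) := by
  rcases le_or_gt (f b) 0 with hb | hb
  · exact ⟨b, Set.right_mem_Icc.2 hab, hb, fun h => absurd h (lt_irrefl b)⟩
  · obtain ⟨x, hx, hfx⟩ := intermediate_value_Icc hab hf ⟨ha, hb.le⟩
    exact ⟨x, hx, hfx.le, fun _ => hfx⟩

theorem csInf_eq_csSup_of_forall_le_of_mem {α : Type*} [ConditionallyCompleteLattice α]
    {P D : Set α} (hle : ∀ d ∈ D, ∀ p ∈ P, d ≤ p)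
    {x : α} (hxP : x ∈ P) (hxD : x ∈ D) : sInf P = sSup D :=
  (IsLeast.csInf_eq ⟨hxP, fun p hp => hle x hxD p hp⟩).trans
    (IsGreatest.csSup_eq ⟨hxD, fun d hd => hle d hd x hxP⟩).symm

section

variable {S : Type*} [Fintype S]

noncomputable def chi2Penalized (μ0 V : S → ℝ) (lam : ℝ) (μ : S → ℝ) : ℝ :=
  ∑ s, μ s * V s + lam * ∑ s, (μ s - μ0 s) ^ 2 / μ0 s

noncomputable def meanVarPenalized (μ0 W : S → ℝ) (lam : ℝ) : ℝ :=
  (∑ s, μ0 s * W s) - 1 / (4 * lam) * ((∑ s, μ0 s * W s ^ 2) - (∑ s, μ0 s * W s) ^ 2)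

theorem chi2Penalized_eq_meanVarPenalized_add_sum_sq {μ0 μ : S → ℝ} (hμ0 : ∀ s, μ0 s ≠ 0)
    (hμ0sum : ∑ s, μ0 s = 1) (hμsum : ∑ s, μ s = 1) {lam : ℝ} (hlam : lam ≠ 0) (W : S → ℝ) :
    chi2Penalized μ0 W lam μ = meanVarPenalized μ0 W lam +
      ∑ s, (2 * lam * (μ s - μ0 s) + μ0 s * (W s - ∑ t, μ0 t * W t)) ^ 2 / (4 * lam * μ0 s) := by
  set c := ∑ t, μ0 t * W t with hc
  have hterm : ∀ s, (2 * lam * (μ s - μ0 s) + μ0 s * (W s - c)) ^ 2 / (4 * lam * μ0 s) =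
      μ s * W s - μ0 s * W s - c * μ s + c * μ0 s + lam * ((μ s - μ0 s) ^ 2 / μ0 s) +
        1 / (4 * lam) * (μ0 s * W s ^ 2) - c / (2 * lam) * (μ0 s * W s) +
        c ^ 2 / (4 * lam) * μ0 s := by
    intro s
    field_simp [hμ0 s]
    ring
  simp only [sum_congr rfl fun s _ => hterm s, sum_add_distrib, sum_sub_distrib, ← mul_sum,
    chi2Penalized, meanVarPenalized, ← hc, hμsum, hμ0sum]
  field_simp
  ring

theorem meanVarPenalized_le_chi2Penalized {μ0 μ W V : S → ℝ} (hμ0 : ∀ s, 0 < μ0 s)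
    (hμ0sum : ∑ s, μ0 s = 1) (hμ : ∀ s, 0 ≤ μ s) (hμsum : ∑ s, μ s = 1) (hWV : W ≤ V)
    {lam : ℝ} (hlam : 0 < lam) :
    meanVarPenalized μ0 W lam ≤ chi2Penalized μ0 V lam μ := by
  have hmono : ∑ s, μ s * W s ≤ ∑ s, μ s * V s :=
    sum_le_sum fun s _ => mul_le_mul_of_nonneg_left (hWV s) (hμ s)
  have hsq : 0 ≤ ∑ s, (2 * lam * (μ s - μ0 s) + μ0 s * (W s - ∑ t, μ0 t * W t)) ^ 2 /
      (4 * lam * μ0 s) :=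
    sum_nonneg fun s _ => div_nonneg (sq_nonneg _) (by have := hμ0 s; positivity)
  have := chi2Penalized_eq_meanVarPenalized_add_sum_sq (fun s => (hμ0 s).ne') hμ0sum hμsum
    hlam.ne' W
  unfold chi2Penalized at *
  linarith

noncomputable def chi2Minimizer (μ0 W : S → ℝ) (lam : ℝ) (s : S) : ℝ :=
  μ0 s * (1 - (W s - ∑ t, μ0 t * W t) / (2 * lam))

theorem sum_chi2Minimizer {μ0 : S → ℝ} (hμ0sum : ∑ s, μ0 s = 1) (W : S → ℝ) (lam : ℝ) :
    ∑ s, chi2Minimizer μ0 W lam s = 1 := by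
  simp only [chi2Minimizer, mul_sub, mul_one, mul_div_assoc', sum_sub_distrib, ← sum_div,
    mul_sub, sum_sub_distrib, ← sum_mul, hμ0sum, one_mul, sub_self, zero_div, sub_zero]

theorem chi2Penalized_chi2Minimizer {μ0 W V : S → ℝ} (hμ0 : ∀ s, μ0 s ≠ 0)
    (hμ0sum : ∑ s, μ0 s = 1) {lam : ℝ} (hlam : lam ≠ 0)
    (hslack : ∀ s, W s < V s → W s = (∑ t, μ0 t * W t) + 2 * lam) (hWV : W ≤ V) :
    chi2Penalized μ0 V lam (chi2Minimizer μ0 W lam) = meanVarPenalized μ0 W lam := by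
  have hV : ∑ s, chi2Minimizer μ0 W lam s * V s = ∑ s, chi2Minimizer μ0 W lam s * W s := by
    refine sum_congr rfl fun s _ => ?_
    rcases (hWV s).lt_or_eq with hlt | heq
    · have : (W s - ∑ t, μ0 t * W t) / (2 * lam) = 1 := by
        rw [div_eq_one_iff_eq (by positivity), hslack s hlt]; ring
      simp [chi2Minimizer, this]
    · rw [heq]
  have hsq : ∀ s, 2 * lam * (chi2Minimizer μ0 W lam s - μ0 s) +
      μ0 s * (W s - ∑ t, μ0 t * W t) = 0 := by
    intro s
    simp only [chi2Minimizer]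
    field_simp
    ring
  have := chi2Penalized_eq_meanVarPenalized_add_sum_sq hμ0 hμ0sum (sum_chi2Minimizer hμ0sum W lam)
    hlam W
  simp only [hsq, zero_pow two_ne_zero, zero_div, sum_const_zero, add_zero] at this
  rw [← this]
  simp only [chi2Penalized, hV]

theorem chi2Minimizer_nonneg {μ0 W : S → ℝ} (hμ0 : ∀ s, 0 ≤ μ0 s) {lam : ℝ} (hlam : 0 < lam)
    (hW : ∀ s, W s ≤ (∑ t, μ0 t * W t) + 2 * lam) (s : S) : 0 ≤ chi2Minimizer μ0 W lam s := by
  refine mul_nonneg (hμ0 s) (sub_nonneg.2 ?_)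
  rw [div_le_one (by positivity)]
  linarith [hW s]

theorem exists_truncation_level [Nonempty S] {μ0 : S → ℝ} (hμ0sum : ∑ s, μ0 s = 1) (V : S → ℝ)
    {lam : ℝ} (hlam : 0 ≤ lam) :
    ∃ α ∈ Set.Icc (univ.inf' univ_nonempty V) (univ.sup' univ_nonempty V),
      (∀ s, min (V s) α ≤ (∑ t, μ0 t * min (V t) α) + 2 * lam) ∧
      (∀ s, min (V s) α < V s → min (V s) α = (∑ t, μ0 t * min (V t) α) + 2 * lam) := by
  set m := univ.inf' univ_nonempty V
  set M := univ.sup' univ_nonempty V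
  have hm : ∀ s, m ≤ V s := fun s => inf'_le V (mem_univ s)
  have hM : ∀ s, V s ≤ M := fun s => le_sup' V (mem_univ s)
  have hmM : m ≤ M := (hm (Classical.arbitrary S)).trans (hM _)
  have hfm : m - ∑ t, μ0 t * min (V t) m - 2 * lam ≤ 0 := by
    simp only [fun t => min_eq_right (hm t), ← sum_mul, hμ0sum, one_mul]
    linarith
  obtain ⟨α, hα, hfα, hroot⟩ := exists_mem_Icc_nonpos_and_eq_zero_of_lt hmM
    (f := fun α => α - ∑ t, μ0 t * min (V t) α - 2 * lam) (by fun_prop) hfm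
  refine ⟨α, hα, fun s => by linarith [min_le_right (V s) α], fun s hs => ?_⟩
  have hαV : α < V s := min_lt_iff.1 hs |>.resolve_left (lt_irrefl _)
  rw [min_eq_right hαV.le]
  linarith [hroot (hαV.trans_le (hM s))]

end

theorem chi2_duality_general {S : Type*} [Fintype S] [Nonempty S]
    (μ0 : S → ℝ) (hμ0pos : ∀ s, 0 < μ0 s) (hμ0sum : ∑ s, μ0 s = 1)
    (V : S → ℝ) (lam : ℝ)
    (hlam : 0 < lam) :
    sInf {x : ℝ | ∃ μ : S → ℝ, (∀ s, 0 ≤ μ s) ∧ (∑ s, μ s = 1) ∧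
        x = ∑ s, μ s * V s + lam * ∑ s, (μ s - μ0 s) ^ 2 / μ0 s} =
      sSup {x : ℝ | ∃ α : ℝ,
        α ∈ Set.Icc (Finset.univ.inf' Finset.univ_nonempty V)
          (Finset.univ.sup' Finset.univ_nonempty V) ∧
        x = (∑ s, μ0 s * min (V s) α) -
          (1 / (4 * lam)) *
            ((∑ s, μ0 s * (min (V s) α) ^ 2) - (∑ s, μ0 s * min (V s) α) ^ 2)} := by
  obtain ⟨α, hα, hW, hslack⟩ := exists_truncation_level hμ0sum V hlam.le
  refine csInf_eq_csSup_of_forall_le_of_mem ?_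
    ⟨chi2Minimizer μ0 _ lam, chi2Minimizer_nonneg (fun s => (hμ0pos s).le) hlam hW,
      sum_chi2Minimizer hμ0sum _ lam, rfl⟩
    ⟨α, hα, chi2Penalized_chi2Minimizer (fun s => (hμ0pos s).ne') hμ0sum hlam.ne' hslack
      fun s => min_le_left _ _⟩
  rintro _ ⟨β, -, rfl⟩ _ ⟨μ, hμ, hμsum, rfl⟩
  exact meanVarPenalized_le_chi2Penalized hμ0pos hμ0sum hμ hμsum (fun s => min_le_left _ β) hlam

theorem chi2_duality {S : Type*} [Fintype S] [Nonempty S]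
    (μ0 : S → ℝ) (hμ0pos : ∀ s, 0 < μ0 s) (hμ0sum : ∑ s, μ0 s = 1)
    (V : S → ℝ) (H lam : ℝ) (hH : 0 ≤ H) (hV : ∀ s, 0 ≤ V s ∧ V s ≤ H)
    (hlam : 0 < lam) :
    sInf {x : ℝ | ∃ μ : S → ℝ, (∀ s, 0 ≤ μ s) ∧ (∑ s, μ s = 1) ∧
        x = ∑ s, μ s * V s + lam * ∑ s, (μ s - μ0 s) ^ 2 / μ0 s} =
      sSup {x : ℝ | ∃ α : ℝ,
        α ∈ Set.Icc (Finset.univ.inf' Finset.univ_nonempty V)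
          (Finset.univ.sup' Finset.univ_nonempty V) ∧
        x = (∑ s, μ0 s * min (V s) α) -
          (1 / (4 * lam)) *
            ((∑ s, μ0 s * (min (V s) α) ^ 2) - (∑ s, μ0 s * min (V s) α) ^ 2)} :=
  chi2_duality_general μ0 hμ0pos hμ0sum V lam hlam
end

section
/- Let φ₁, …, φ_K ∈ ℝ^d with ‖φ_τ‖₂ ≤ 1, γ > 0, Λ = Σ_{τ=1}^K φ_τ φ_τᵀ + γ·I, and let c₁, …, c_K be real numbers with |c_τ| ≤ H for each τ. Then ‖Λ⁻¹ Σ_{τ=1}^K c_τ φ_τ‖₂ ≤ H·√(Kd/γ). -/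
/-! Write `w = Λ⁻¹ ∑ τ, cτ φτ` and `aτ = φτ ⬝ᵥ w`. Pairing `Λ w = ∑ τ, cτ φτ` with `w` gives
`‖a‖² + γ ‖w‖² = ∑ τ, cτ aτ ≤ ‖c‖ ‖a‖` by Cauchy–Schwarz, and `‖c‖ ‖a‖ - ‖a‖² ≤ ‖c‖² / 4 ≤ H² K / 4`.
Hence `γ ‖w‖² ≤ H² K / 4`. -/

open scoped Matrix

namespace Matrix

variable {ι n : Type*} [Fintype ι] [Fintype n] [DecidableEq n]

noncomputable def ridgeGram (φ : ι → n → ℝ) (γ : ℝ) : Matrix n n ℝ :=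
  (∑ τ, vecMulVec (φ τ) (φ τ)) + γ • 1

theorem ridgeGram_posDef (φ : ι → n → ℝ) {γ : ℝ} (hγ : 0 < γ) : (ridgeGram φ γ).PosDef :=
  PosDef.posSemidef_add
    (posSemidef_sum _ fun τ _ => by simpa using posSemidef_vecMulVec_self_star (φ τ))
    (PosDef.one.smul hγ)

theorem dotProduct_ridgeGram_mulVec (φ : ι → n → ℝ) (γ : ℝ) (w : n → ℝ) :
    w ⬝ᵥ (ridgeGram φ γ *ᵥ w) = ∑ τ, (φ τ ⬝ᵥ w) ^ 2 + γ * (w ⬝ᵥ w) := by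
  rw [ridgeGram, add_mulVec, sum_mulVec, smul_mulVec, one_mulVec, dotProduct_add, dotProduct_sum,
    dotProduct_smul, smul_eq_mul]
  congr 1
  refine Finset.sum_congr rfl fun τ _ => ?_
  rw [vecMulVec_mulVec, op_smul_eq_smul, dotProduct_smul, smul_eq_mul, dotProduct_comm, sq]

theorem four_mul_dotProduct_self_le_of_ridgeGram_mulVec_eq {φ : ι → n → ℝ} {γ H : ℝ}
    {c : ι → ℝ} (hc : ∀ τ, |c τ| ≤ H) {w : n → ℝ}
    (hw : ridgeGram φ γ *ᵥ w = ∑ τ, c τ • φ τ) :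
    4 * (γ * (w ⬝ᵥ w)) ≤ H ^ 2 * Fintype.card ι := by
  set a : ι → ℝ := fun τ => φ τ ⬝ᵥ w
  have hpair : ∑ τ, a τ ^ 2 + γ * (w ⬝ᵥ w) = ∑ τ, c τ * a τ := by
    rw [← dotProduct_ridgeGram_mulVec, hw, dotProduct_sum]
    exact Finset.sum_congr rfl fun τ _ => by rw [dotProduct_smul, smul_eq_mul, dotProduct_comm]
  have hc_sq : ∑ τ, c τ ^ 2 ≤ H ^ 2 * Fintype.card ι := by
    calc ∑ τ, c τ ^ 2 ≤ ∑ _τ : ι, H ^ 2 :=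
          Finset.sum_le_sum fun τ _ => sq_le_sq' (abs_le.mp (hc τ)).1 (abs_le.mp (hc τ)).2
      _ = H ^ 2 * Fintype.card ι := by simp [mul_comm]
  have hcs := Real.sum_mul_le_sqrt_mul_sqrt Finset.univ c a
  have hsa := Real.sq_sqrt (Finset.sum_nonneg fun τ (_ : τ ∈ Finset.univ) => sq_nonneg (a τ))
  have hsc := Real.sq_sqrt (Finset.sum_nonneg fun τ (_ : τ ∈ Finset.univ) => sq_nonneg (c τ))
  nlinarith [sq_nonneg (√(∑ τ, c τ ^ 2) - 2 * √(∑ τ, a τ ^ 2))]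

end Matrix

theorem ridge_weight_bound_general {d K : ℕ} (hd : 0 < d)
    (φ : Fin K → Fin d → ℝ)
    (γ H : ℝ) (hγ : 0 < γ) (hH : 0 ≤ H)
    (Λ : Matrix (Fin d) (Fin d) ℝ)
    (hΛ : Λ = (∑ τ, Matrix.vecMulVec (φ τ) (φ τ)) + γ • (1 : Matrix (Fin d) (Fin d) ℝ))
    (c : Fin K → ℝ) (hc : ∀ τ, |c τ| ≤ H) :
    Real.sqrt (∑ i, (Λ⁻¹ *ᵥ (∑ τ, c τ • φ τ)) i ^ 2) ≤ H * Real.sqrt (K * d / γ) := by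
  change Λ = Matrix.ridgeGram φ γ at hΛ
  set w := Λ⁻¹ *ᵥ ∑ τ, c τ • φ τ
  have hw : Λ *ᵥ w = ∑ τ, c τ • φ τ := by
    have hdet : IsUnit Λ.det := (Matrix.isUnit_iff_isUnit_det Λ).mp
      (hΛ ▸ (Matrix.ridgeGram_posDef φ hγ).isUnit)
    rw [Matrix.mulVec_mulVec, Matrix.mul_nonsing_inv _ hdet, Matrix.one_mulVec]
  have hw_sq : 4 * (γ * (w ⬝ᵥ w)) ≤ H ^ 2 * K := by
    simpa using Matrix.four_mul_dotProduct_self_le_of_ridgeGram_mulVec_eq hc (hΛ ▸ hw)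
  have hγw : γ * ∑ i, w i ^ 2 ≤ H ^ 2 * (K * d) := by
    have hK_le : (K : ℝ) ≤ K * d := le_mul_of_one_le_right K.cast_nonneg (by exact_mod_cast hd)
    have hγw_nonneg : 0 ≤ γ * ∑ i, w i ^ 2 := by positivity
    simp only [dotProduct, ← sq] at hw_sq
    linarith [mul_le_mul_of_nonneg_left hK_le (sq_nonneg H)]
  have hw_le : ∑ i, w i ^ 2 ≤ H ^ 2 * (K * d / γ) := by
    rw [mul_div_assoc', le_div_iff₀ hγ]
    linarith
  calc √(∑ i, w i ^ 2) ≤ √(H ^ 2 * (K * d / γ)) := Real.sqrt_le_sqrt hw_le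
    _ = H * √(K * d / γ) := by rw [Real.sqrt_mul (sq_nonneg H), Real.sqrt_sq hH]

theorem ridge_weight_bound {d K : ℕ} (hd : 0 < d) (hK : 0 < K)
    (φ : Fin K → Fin d → ℝ) (hφ : ∀ τ, Real.sqrt (∑ i, φ τ i ^ 2) ≤ 1)
    (γ H : ℝ) (hγ : 0 < γ) (hH : 0 ≤ H)
    (Λ : Matrix (Fin d) (Fin d) ℝ)
    (hΛ : Λ = (∑ τ, Matrix.vecMulVec (φ τ) (φ τ)) + γ • (1 : Matrix (Fin d) (Fin d) ℝ))
    (c : Fin K → ℝ) (hc : ∀ τ, |c τ| ≤ H) :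
    Real.sqrt (∑ i, (Λ⁻¹ *ᵥ (∑ τ, c τ • φ τ)) i ^ 2) ≤ H * Real.sqrt (K * d / γ) :=
  ridge_weight_bound_general hd φ γ H hγ hH Λ hΛ c hc
end

section
/- Let λ > 0 and ε ∈ (0, 1). For all v ∈ [0, λ], it holds that λ·log(ε·exp(v/λ) + (1 − ε)) ≤ λ·ε·(e − 1), where e is Euler's number. Equivalently, −λ·log(ε + (1−ε)·exp(−v/λ)) ≥ v − λ·ε·(e − 1). -/
/-!
With `t = v / λ ∈ [0, 1]`, the argument `ε eᵗ + (1 - ε) = 1 + ε (eᵗ - 1)` is bounded via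
`log y ≤ y - 1` by `ε (eᵗ - 1) ≤ ε (e - 1)`. The second inequality is the first one in disguise:
factoring `e⁻ᵗ` out of `ε + (1 - ε) e⁻ᵗ` turns `-λ log (ε + (1 - ε) e⁻ᵗ)` into
`v - λ log (ε eᵗ + (1 - ε))`.
-/

open Real

lemma mix_exp_pos {ε : ℝ} (hε : ε ∈ Set.Icc (0 : ℝ) 1) (t : ℝ) : 0 < ε * exp t + (1 - ε) := by
  rcases hε.1.eq_or_lt with rfl | hε0
  · norm_num
  · nlinarith [exp_pos t, hε.2]

lemma log_mix_exp_le {ε : ℝ} (hε : ε ∈ Set.Icc (0 : ℝ) 1) (t : ℝ) :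
    log (ε * exp t + (1 - ε)) ≤ ε * (exp t - 1) :=
  calc log (ε * exp t + (1 - ε)) ≤ ε * exp t + (1 - ε) - 1 :=
        log_le_sub_one_of_pos (mix_exp_pos hε t)
    _ = ε * (exp t - 1) := by ring

lemma log_mix_exp_neg {ε : ℝ} (hε : ε ∈ Set.Icc (0 : ℝ) 1) (t : ℝ) :
    log (ε + (1 - ε) * exp (-t)) = -t + log (ε * exp t + (1 - ε)) := by
  have hfactor : ε + (1 - ε) * exp (-t) = exp (-t) * (ε * exp t + (1 - ε)) := by
    rw [exp_neg]
    field_simp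
  rw [hfactor, log_mul (exp_ne_zero _) (mix_exp_pos hε t).ne', log_exp]

theorem kl_perturb_bound (lam ε v : ℝ) (hlam : 0 < lam) (hε : ε ∈ Set.Ioo (0 : ℝ) 1)
    (hv : v ∈ Set.Icc 0 lam) :
    lam * Real.log (ε * Real.exp (v / lam) + (1 - ε)) ≤ lam * ε * (Real.exp 1 - 1) ∧
    v - lam * ε * (Real.exp 1 - 1) ≤ -lam * Real.log (ε + (1 - ε) * Real.exp (-v / lam)) := by
  have hε' : ε ∈ Set.Icc (0 : ℝ) 1 := Set.Ioo_subset_Icc_self hε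
  have hexp : exp (v / lam) ≤ exp 1 := exp_le_exp.2 ((div_le_one hlam).2 hv.2)
  have hlog : log (ε * exp (v / lam) + (1 - ε)) ≤ ε * (exp 1 - 1) :=
    (log_mix_exp_le hε' _).trans (mul_le_mul_of_nonneg_left (by linarith) hε'.1)
  have hfirst : lam * log (ε * exp (v / lam) + (1 - ε)) ≤ lam * ε * (exp 1 - 1) := by
    rw [mul_assoc]
    exact mul_le_mul_of_nonneg_left hlog hlam.le
  refine ⟨hfirst, ?_⟩
  have hv_eq : lam * (v / lam) = v := mul_div_cancel₀ v hlam.ne'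
  rw [neg_div, log_mix_exp_neg hε']
  linarith
end
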